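/- arXiv:2012.15457 — 3 statements merged into one kernel-verified Lean document; each statement's English description precedes it below -/
import Mathlib

section
/- Let f_0,...,f_{m-1} be continuous self-maps of a compact metric space, φ continuous, 0<r<1, c∈ℝ. If c ≥ 1 then P^s_r(f_0,...,f_{m-1},cφ) ≤ c·P^s_r(f_0,...,f_{m-1},φ) + (c−1)log m; if c ≤ 1 then P^s_r(f_0,...,f_{m-1},cφ) ≥ c·P^s_r(f_0,...,f_{m-1},φ) + (c−1)log m. -/
open Filter Topology

section FSG

variable {X : Type*}

/-- Apply the maps of the free semigroup action along a word; the first letter of the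
list is applied first. -/
def fw {ι : Type*} (f : ι → X → X) (w : List ι) (x : X) : X :=
  w.foldl (fun y a => f a y) x

/-- The Birkhoff-type sum `(S_w φ)(x) = ∑_{w' ≤ w} φ(f_{w'} x)`. -/
noncomputable def Sw {ι : Type*} (f : ι → X → X) (φ : X → ℝ) (w : List ι) (x : X) : ℝ :=
  ∑ i ∈ Finset.range w.length, φ (fw f (w.take i) x)

variable [MetricSpace X]

/-- `F` is a `(w, ε, r)`-spanning set for the free semigroup action. -/
def rSpan {ι : Type*} (f : ι → X → X) (w : List ι) (ε r : ℝ) (F : Finset X) : Prop :=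
  ∀ x : X, ∃ y ∈ F, (1 - r) * w.length <
    (((Finset.range w.length).filter
      (fun i => dist (fw f (w.take i) x) (fw f (w.take i) y) < ε)).card : ℝ)

/-- `E` is a `(w, ε, r)`-separated set for the free semigroup action. -/
def rSep {ι : Type*} (f : ι → X → X) (w : List ι) (ε r : ℝ) (E : Finset X) : Prop :=
  ∀ x ∈ E, ∀ y ∈ E, x ≠ y → r * w.length <
    (((Finset.range w.length).filter
      (fun i => ε ≤ dist (fw f (w.take i) x) (fw f (w.take i) y))).card : ℝ)

/-- `Q_w(f_0,…,f_{m-1},φ,ε,r)` (spanning-set version). -/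
noncomputable def Qw {ι : Type*} (f : ι → X → X) (φ : X → ℝ) (w : List ι) (ε r : ℝ) : ℝ :=
  sInf {s : ℝ | ∃ F : Finset X, rSpan f w ε r F ∧ s = ∑ x ∈ F, Real.exp (Sw f φ w x)}

/-- `Q_w^s(f_0,…,f_{m-1},φ,ε,r)` (separated-set version). -/
noncomputable def Qws {ι : Type*} (f : ι → X → X) (φ : X → ℝ) (w : List ι) (ε r : ℝ) : ℝ :=
  sSup {s : ℝ | ∃ E : Finset X, rSep f w ε r E ∧ s = ∑ x ∈ E, Real.exp (Sw f φ w x)}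

/-- `Q_n(f_0,…,f_{m-1},φ,ε,r) = (1/m^n) ∑_{|w|=n} Q_w`. -/
noncomputable def Qn {ι : Type*} [Fintype ι] (f : ι → X → X) (φ : X → ℝ)
    (n : ℕ) (ε r : ℝ) : ℝ :=
  (1 / (Fintype.card ι : ℝ) ^ n) * ∑ σ : Fin n → ι, Qw f φ (List.ofFn σ) ε r

/-- `Q_n^s(f_0,…,f_{m-1},φ,ε,r) = (1/m^n) ∑_{|w|=n} Q_w^s`. -/
noncomputable def Qns {ι : Type*} [Fintype ι] (f : ι → X → X) (φ : X → ℝ)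
    (n : ℕ) (ε r : ℝ) : ℝ :=
  (1 / (Fintype.card ι : ℝ) ^ n) * ∑ σ : Fin n → ι, Qws f φ (List.ofFn σ) ε r

/-- The topological `r`-pressure of the free semigroup action (spanning sets);
the limit as `ε → 0` is realised as a supremum over `ε > 0`, the quantity being
monotone in `ε`. -/
noncomputable def Pr {ι : Type*} [Fintype ι] (f : ι → X → X) (φ : X → ℝ) (r : ℝ) : EReal :=
  ⨆ ε ∈ Set.Ioi (0 : ℝ), atTop.limsup fun n : ℕ =>
    (((n : ℝ)⁻¹ * Real.log (Qn f φ n ε r) : ℝ) : EReal)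

/-- `P^s_r(f_0,…,f_{m-1},φ,ε)`, the fixed-`ε` separated-set `r`-pressure. -/
noncomputable def Pse {ι : Type*} [Fintype ι] (f : ι → X → X) (φ : X → ℝ) (ε r : ℝ) : EReal :=
  atTop.limsup fun n : ℕ => (((n : ℝ)⁻¹ * Real.log (Qns f φ n ε r) : ℝ) : EReal)

/-- The topological `r`-pressure of the free semigroup action (separated sets). -/
noncomputable def Ps {ι : Type*} [Fintype ι] (f : ι → X → X) (φ : X → ℝ) (r : ℝ) : EReal :=
  ⨆ ε ∈ Set.Ioi (0 : ℝ), Pse f φ ε r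

/-- Liminf variant of the separated-set topological `r`-pressure. -/
noncomputable def PsInf {ι : Type*} [Fintype ι] (f : ι → X → X) (φ : X → ℝ) (r : ℝ) : EReal :=
  ⨆ ε ∈ Set.Ioi (0 : ℝ), atTop.liminf fun n : ℕ =>
    (((n : ℝ)⁻¹ * Real.log (Qns f φ n ε r) : ℝ) : EReal)

/-- `F` is a `(w, ε)`-spanning set for the Bowen metric `d_w` of the free semigroup action. -/
def span0 {ι : Type*} (f : ι → X → X) (w : List ι) (ε : ℝ) (F : Finset X) : Prop :=
  ∀ x : X, ∃ y ∈ F, ∀ i < w.length,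
    dist (fw f (w.take i) x) (fw f (w.take i) y) ≤ ε

/-- `E` is a `(w, ε)`-separated set for the Bowen metric `d_w`. -/
def sep0 {ι : Type*} (f : ι → X → X) (w : List ι) (ε : ℝ) (E : Finset X) : Prop :=
  ∀ x ∈ E, ∀ y ∈ E, x ≠ y → ∃ i < w.length,
    ε < dist (fw f (w.take i) x) (fw f (w.take i) y)

noncomputable def Qw0 {ι : Type*} (f : ι → X → X) (φ : X → ℝ) (w : List ι) (ε : ℝ) : ℝ :=
  sInf {s : ℝ | ∃ F : Finset X, span0 f w ε F ∧ s = ∑ x ∈ F, Real.exp (Sw f φ w x)}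

noncomputable def Qws0 {ι : Type*} (f : ι → X → X) (φ : X → ℝ) (w : List ι) (ε : ℝ) : ℝ :=
  sSup {s : ℝ | ∃ E : Finset X, sep0 f w ε E ∧ s = ∑ x ∈ E, Real.exp (Sw f φ w x)}

noncomputable def Qn0 {ι : Type*} [Fintype ι] (f : ι → X → X) (φ : X → ℝ) (n : ℕ) (ε : ℝ) : ℝ :=
  (1 / (Fintype.card ι : ℝ) ^ n) * ∑ σ : Fin n → ι, Qw0 f φ (List.ofFn σ) ε

noncomputable def Qns0 {ι : Type*} [Fintype ι] (f : ι → X → X) (φ : X → ℝ) (n : ℕ) (ε : ℝ) : ℝ :=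
  (1 / (Fintype.card ι : ℝ) ^ n) * ∑ σ : Fin n → ι, Qws0 f φ (List.ofFn σ) ε

/-- The topological pressure of the free semigroup action. -/
noncomputable def P0 {ι : Type*} [Fintype ι] (f : ι → X → X) (φ : X → ℝ) : EReal :=
  ⨆ ε ∈ Set.Ioi (0 : ℝ), atTop.limsup fun n : ℕ =>
    (((n : ℝ)⁻¹ * Real.log (Qn0 f φ n ε) : ℝ) : EReal)

/-- `r_w(ε,r)`: the smallest cardinality of a `(w,ε,r)`-spanning set. -/
noncomputable def rSpanCard {ι : Type*} (f : ι → X → X) (w : List ι) (ε r : ℝ) : ℕ :=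
  sInf {k : ℕ | ∃ F : Finset X, rSpan f w ε r F ∧ F.card = k}

/-- The topological `r`-entropy of the free semigroup action. -/
noncomputable def hrEnt {ι : Type*} [Fintype ι] (f : ι → X → X) (r : ℝ) : EReal :=
  ⨆ ε ∈ Set.Ioi (0 : ℝ), atTop.limsup fun n : ℕ =>
    (((n : ℝ)⁻¹ * Real.log ((1 / (Fintype.card ι : ℝ) ^ n) *
      ∑ σ : Fin n → ι, (rSpanCard f (List.ofFn σ) ε r : ℝ)) : ℝ) : EReal)

end FSG


/-!
Since `exp (S_w (c φ)) = exp (S_w φ) ^ c`, the elementary inequalities `∑ aᵢ ^ c ≤ (∑ aᵢ) ^ c`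
for `c ≥ 1` and `(∑ aᵢ) ^ c ≤ ∑ aᵢ ^ c` for `c ≤ 1` (with `aᵢ > 0`) compare `Q_w^s(c φ)` with
`Q_w^s(φ) ^ c` for every word `w`, and then `∑_{|w| = n} Q_w^s(c φ)` with
`(∑_{|w| = n} Q_w^s(φ)) ^ c`. After the normalisation by `m ^ n` this reads
`log Q_n^s(c φ) ≤ c log Q_n^s(φ) + (c - 1) n log m` (resp. `≥`), which survives the `limsup` in `n`
and the supremum over `ε`. Compactness is only needed to make the suprema `Q_w^s` finite, through
a bound `K ^ |w|` on the size of `(w, ε, r)`-separated sets.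
-/

namespace Real

theorem sum_rpow_le_rpow_sum {ι : Type*} {s : Finset ι} {a : ι → ℝ} (ha : ∀ i ∈ s, 0 ≤ a i)
    {p : ℝ} (hp : 1 ≤ p) : ∑ i ∈ s, a i ^ p ≤ (∑ i ∈ s, a i) ^ p := by
  have hS : 0 ≤ ∑ i ∈ s, a i := Finset.sum_nonneg ha
  calc ∑ i ∈ s, a i ^ p = ∑ i ∈ s, a i * a i ^ (p - 1) := Finset.sum_congr rfl fun i hi => by
        rw [← rpow_one_add' (ha i hi) (by linarith), add_sub_cancel]
    _ ≤ ∑ i ∈ s, a i * (∑ j ∈ s, a j) ^ (p - 1) := Finset.sum_le_sum fun i hi =>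
        mul_le_mul_of_nonneg_left
          (rpow_le_rpow (ha i hi) (Finset.single_le_sum ha hi) (by linarith)) (ha i hi)
    _ = (∑ i ∈ s, a i) ^ p := by
        rw [← Finset.sum_mul, ← rpow_one_add' hS (by linarith), add_sub_cancel]

theorem rpow_sum_le_sum_rpow {ι : Type*} {s : Finset ι} (hs : s.Nonempty) {a : ι → ℝ}
    (ha : ∀ i ∈ s, 0 < a i) {p : ℝ} (hp : p ≤ 1) : (∑ i ∈ s, a i) ^ p ≤ ∑ i ∈ s, a i ^ p := by
  have hS : 0 < ∑ i ∈ s, a i := Finset.sum_pos ha hs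
  have hpow : ∀ x : ℝ, 0 < x → x * x ^ (p - 1) = x ^ p := fun x hx => by
    rw [rpow_sub_one hx.ne', mul_div_cancel₀ _ hx.ne']
  calc (∑ i ∈ s, a i) ^ p = ∑ i ∈ s, a i * (∑ j ∈ s, a j) ^ (p - 1) := by
        rw [← Finset.sum_mul, hpow _ hS]
    _ ≤ ∑ i ∈ s, a i * a i ^ (p - 1) := Finset.sum_le_sum fun i hi =>
        mul_le_mul_of_nonneg_left
          (rpow_le_rpow_of_nonpos (ha i hi) (Finset.single_le_sum (fun j hj => (ha j hj).le) hi)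
            (by linarith)) (ha i hi).le
    _ = ∑ i ∈ s, a i ^ p := Finset.sum_congr rfl fun i hi => hpow _ (ha i hi)

end Real

namespace EReal

variable {α : Type*} {c d : ℝ}

theorem limsup_le_const_mul_limsup_add {f : Filter α} [NeBot f] {u v : α → EReal} (hc : 0 ≤ c)
    (h : ∀ᶠ n in f, u n ≤ c * v n + d) : limsup u f ≤ c * limsup v f + d :=
  calc limsup u f ≤ limsup ((fun n => c * v n) + fun _ => (d : EReal)) f :=
        limsup_le_limsup (h.mono fun _ hn => hn)
    _ ≤ limsup (fun n => c * v n) f + limsup (fun _ => (d : EReal)) f :=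
        limsup_add_le (.inr (by simp)) (.inr (by simp))
    _ = c * limsup v f + d := by
        rw [limsup_const_mul_of_nonneg_of_ne_top (by exact_mod_cast hc) (coe_ne_top c),
          limsup_const]

theorem const_mul_limsup_add_le {f : Filter α} [NeBot f] {u v : α → EReal}
    (h : ∀ᶠ n in f, c * v n + d ≤ u n) : c * limsup v f + d ≤ limsup u f := by
  have hmul : (c : EReal) * limsup v f ≤ limsup (fun n => c * v n) f := by
    rcases le_total 0 c with hc | hc
    · rw [limsup_const_mul_of_nonneg_of_ne_top (by exact_mod_cast hc) (coe_ne_top c)]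
    · rw [limsup_const_mul_of_nonpos_of_ne_bot (by exact_mod_cast hc) (coe_ne_bot c),
        mul_comm, mul_comm (c : EReal)]
      exact mul_le_mul_of_nonpos_right liminf_le_limsup (by exact_mod_cast hc)
  calc (c : EReal) * limsup v f + d
      ≤ limsup (fun n => c * v n) f + liminf (fun _ => (d : EReal)) f := by
        rw [liminf_const]; exact add_le_add_left hmul _
    _ ≤ limsup ((fun n => c * v n) + fun _ => (d : EReal)) f := le_limsup_add
    _ ≤ limsup u f := limsup_le_limsup (h.mono fun _ hn => hn)

theorem biSup_le_const_mul_biSup_add {s : Set α} {x y : α → EReal} (hc : 0 ≤ c)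
    (h : ∀ i ∈ s, y i ≤ c * x i + d) : ⨆ i ∈ s, y i ≤ c * (⨆ i ∈ s, x i) + d :=
  iSup₂_le fun i hi => (h i hi).trans <|
    add_le_add_left (mul_le_mul_of_nonneg_left (le_iSup₂ (f := fun j _ => x j) i hi)
      (by exact_mod_cast hc)) _

theorem const_mul_biSup_add_le {s : Set α} (hs : s.Nonempty) {x y : α → EReal}
    (h : ∀ i ∈ s, c * x i + d ≤ y i) : c * (⨆ i ∈ s, x i) + d ≤ ⨆ i ∈ s, y i := by
  rcases le_or_gt c 0 with hc | hc
  · obtain ⟨i, hi⟩ := hs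
    calc (c : EReal) * (⨆ i ∈ s, x i) + d ≤ c * x i + d := by
          refine add_le_add_left ?_ _
          rw [mul_comm, mul_comm (c : EReal)]
          exact mul_le_mul_of_nonpos_right (le_iSup₂ (f := fun j _ => x j) i hi)
            (by exact_mod_cast hc)
      _ ≤ y i := h i hi
      _ ≤ ⨆ i ∈ s, y i := le_iSup₂ (f := fun j _ => y j) i hi
  · have hc' : (0 : EReal) < c := by exact_mod_cast hc
    -- for `c > 0`, `c * x + d ≤ y ↔ x ≤ (y - d) / c`, and the supremum over `x` commutes with that
    rw [← le_sub_iff_add_le (.inl (coe_ne_bot _)) (.inl (coe_ne_top _)), mul_comm,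
      ← le_div_iff_mul_le hc' (coe_ne_top c)]
    refine iSup₂_le fun i hi => ?_
    rw [le_div_iff_mul_le hc' (coe_ne_top c), mul_comm,
      le_sub_iff_add_le (.inl (coe_ne_bot _)) (.inl (coe_ne_top _))]
    exact (h i hi).trans (le_iSup₂ (f := fun j _ => y j) i hi)

end EReal

section BirkhoffSums

variable {X ι : Type*} (f : ι → X → X)

theorem Sw_const_mul (c : ℝ) (ψ : X → ℝ) (w : List ι) (x : X) :
    Sw f (fun y => c * ψ y) w x = c * Sw f ψ w x :=
  (Finset.mul_sum _ _ _).symm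

theorem exp_Sw_const_mul (c : ℝ) (ψ : X → ℝ) (w : List ι) (x : X) :
    Real.exp (Sw f (fun y => c * ψ y) w x) = Real.exp (Sw f ψ w x) ^ c := by
  rw [Sw_const_mul, mul_comm, Real.exp_mul]

theorem Sw_le {ψ : X → ℝ} {M : ℝ} (hM : ∀ x, ψ x ≤ M) (w : List ι) (x : X) :
    Sw f ψ w x ≤ w.length * M :=
  (Finset.sum_le_card_nsmul (Finset.range w.length) _ M fun i _ => hM _).trans_eq (by simp)

end BirkhoffSums

section SeparatedSets

variable {X ι : Type*} [MetricSpace X] (f : ι → X → X) {w : List ι} {ε r : ℝ}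

theorem rSep.exists_le_dist {E : Finset X} (hE : rSep f w ε r E) (hr : 0 ≤ r) {x y : X}
    (hx : x ∈ E) (hy : y ∈ E) (hxy : x ≠ y) :
    ∃ i < w.length, ε ≤ dist (fw f (w.take i) x) (fw f (w.take i) y) := by
  obtain ⟨i, hi⟩ : ((Finset.range w.length).filter
      (fun i => ε ≤ dist (fw f (w.take i) x) (fw f (w.take i) y))).Nonempty := by
    rw [← Finset.card_pos, ← Nat.cast_pos (α := ℝ)]
    exact (mul_nonneg hr w.length.cast_nonneg).trans_lt (hE x hx y hy hxy)
  rw [Finset.mem_filter, Finset.mem_range] at hi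
  exact ⟨i, hi⟩

/-- Points of a separated set have distinct itineraries through a finite `ε/2`-net. -/
theorem exists_card_le_pow_of_rSep [CompactSpace X] (hε : 0 < ε) (hr : 0 ≤ r) :
    ∃ K : ℕ, ∀ (w : List ι) (E : Finset X), rSep f w ε r E → E.card ≤ K ^ w.length := by
  obtain ⟨t, -, ht⟩ := (isCompact_univ (X := X)).elim_nhds_subcover
    (fun x => Metric.ball x (ε / 2)) fun x _ => Metric.ball_mem_nhds x (half_pos hε)
  have hnet : ∀ z : X, ∃ y ∈ t, dist z y < ε / 2 := fun z => by
    simpa only [Set.mem_iUnion, Metric.mem_ball, exists_prop] using ht (Set.mem_univ z)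
  choose center hcenter_mem hcenter_dist using hnet
  refine ⟨t.card, fun w E hE => ?_⟩
  let itinerary : X → Fin w.length → X := fun x i => center (fw f (w.take i) x)
  have hinj : Set.InjOn itinerary E := by
    intro x hx y hy hxy
    by_contra hne
    obtain ⟨i, hi, hsep⟩ := hE.exists_le_dist f hr hx hy hne
    have hsame : center (fw f (w.take i) x) = center (fw f (w.take i) y) :=
      congrFun hxy ⟨i, hi⟩
    have hx' := hcenter_dist (fw f (w.take i) x)
    rw [hsame] at hx'
    linarith [dist_triangle_right (fw f (w.take i) x) (fw f (w.take i) y)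
      (center (fw f (w.take i) y)), hcenter_dist (fw f (w.take i) y)]
  calc E.card ≤ (Fintype.piFinset fun _ : Fin w.length => t).card :=
        Finset.card_le_card_of_injOn itinerary
          (fun x _ => Fintype.mem_piFinset.2 fun i => hcenter_mem _) hinj
    _ = t.card ^ w.length := by simp

end SeparatedSets

section SeparatedSums

variable {X ι : Type*} [MetricSpace X] (f : ι → X → X) {ψ : X → ℝ} {w : List ι} {ε r : ℝ}

def sepSums (ψ : X → ℝ) (w : List ι) (ε r : ℝ) : Set ℝ :=
  {s | ∃ E : Finset X, rSep f w ε r E ∧ s = ∑ x ∈ E, Real.exp (Sw f ψ w x)}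

theorem bddAbove_sepSums [CompactSpace X] (hψ : Continuous ψ) (hε : 0 < ε) (hr : 0 ≤ r)
    (w : List ι) : BddAbove (sepSums f ψ w ε r) := by
  obtain ⟨K, hK⟩ := exists_card_le_pow_of_rSep f hε hr
  obtain ⟨M, hM⟩ := (isCompact_range hψ).bddAbove
  refine ⟨K ^ w.length * Real.exp (w.length * M), ?_⟩
  rintro _ ⟨E, hE, rfl⟩
  calc ∑ x ∈ E, Real.exp (Sw f ψ w x) ≤ E.card • Real.exp (w.length * M) :=
        Finset.sum_le_card_nsmul _ _ _ fun x _ =>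
          Real.exp_le_exp.2 (Sw_le f (fun y => hM ⟨y, rfl⟩) w x)
    _ ≤ K ^ w.length * Real.exp (w.length * M) := by
        rw [nsmul_eq_mul]
        gcongr
        exact_mod_cast hK w E hE

theorem sum_exp_Sw_le_Qws (hbdd : BddAbove (sepSums f ψ w ε r)) {E : Finset X}
    (hE : rSep f w ε r E) : ∑ x ∈ E, Real.exp (Sw f ψ w x) ≤ Qws f ψ w ε r :=
  le_csSup hbdd ⟨E, hE, rfl⟩

theorem exp_Sw_le_Qws (hbdd : BddAbove (sepSums f ψ w ε r)) (x : X) :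
    Real.exp (Sw f ψ w x) ≤ Qws f ψ w ε r := by
  simpa using sum_exp_Sw_le_Qws f hbdd (E := {x}) fun y hy z hz hyz => by
    simp_all

theorem Qws_le {b : ℝ}
    (h : ∀ E : Finset X, rSep f w ε r E → ∑ x ∈ E, Real.exp (Sw f ψ w x) ≤ b) :
    Qws f ψ w ε r ≤ b :=
  csSup_le ⟨0, ∅, fun x hx => by simp at hx, by simp⟩ fun _ ⟨E, hE, hs⟩ => hs ▸ h E hE

theorem Qws_nonneg : 0 ≤ Qws f ψ w ε r :=
  Real.sSup_nonneg fun _ ⟨_, _, hs⟩ => hs ▸ Finset.sum_nonneg fun _ _ => (Real.exp_pos _).le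

theorem Qws_pos [Nonempty X] (hbdd : BddAbove (sepSums f ψ w ε r)) : 0 < Qws f ψ w ε r :=
  (Real.exp_pos _).trans_le (exp_Sw_le_Qws f hbdd (Classical.arbitrary X))

theorem Qws_eq_zero [IsEmpty X] : Qws f ψ w ε r = 0 :=
  (Qws_le f fun E _ => by simp [Finset.eq_empty_of_isEmpty E]).antisymm (Qws_nonneg f)

theorem Qws_const_mul_le_rpow (hbdd : BddAbove (sepSums f ψ w ε r)) {c : ℝ} (hc : 1 ≤ c) :
    Qws f (fun x => c * ψ x) w ε r ≤ Qws f ψ w ε r ^ c := by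
  refine Qws_le f fun E hE => ?_
  calc ∑ x ∈ E, Real.exp (Sw f (fun y => c * ψ y) w x)
      = ∑ x ∈ E, Real.exp (Sw f ψ w x) ^ c := by
        simp only [exp_Sw_const_mul]
    _ ≤ (∑ x ∈ E, Real.exp (Sw f ψ w x)) ^ c :=
        Real.sum_rpow_le_rpow_sum (fun x _ => (Real.exp_pos _).le) hc
    _ ≤ Qws f ψ w ε r ^ c :=
        Real.rpow_le_rpow (Finset.sum_nonneg fun x _ => (Real.exp_pos _).le)
          (sum_exp_Sw_le_Qws f hbdd hE) (by linarith)

/-- For `0 < c ≤ 1`, apply `Qws_const_mul_le_rpow` to `c * ψ` with exponent `c⁻¹ ≥ 1`;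
for `c ≤ 0` a single point already gives the bound. -/
theorem rpow_le_Qws_const_mul [Nonempty X] (hbdd : BddAbove (sepSums f ψ w ε r)) {c : ℝ}
    (hbdd' : BddAbove (sepSums f (fun x => c * ψ x) w ε r)) (hc : c ≤ 1) :
    Qws f ψ w ε r ^ c ≤ Qws f (fun x => c * ψ x) w ε r := by
  rcases le_or_gt c 0 with hc0 | hc0
  · obtain ⟨x⟩ : Nonempty X := inferInstance
    calc Qws f ψ w ε r ^ c ≤ Real.exp (Sw f ψ w x) ^ c :=
          Real.rpow_le_rpow_of_nonpos (Real.exp_pos _) (exp_Sw_le_Qws f hbdd x) hc0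
      _ = Real.exp (Sw f (fun y => c * ψ y) w x) := (exp_Sw_const_mul f c ψ w x).symm
      _ ≤ Qws f (fun x => c * ψ x) w ε r := exp_Sw_le_Qws f hbdd' x
  · have hψ : (fun x => c⁻¹ * (c * ψ x)) = ψ := funext fun x => inv_mul_cancel_left₀ hc0.ne' _
    have key := Qws_const_mul_le_rpow f hbdd' (one_le_inv₀ hc0 |>.2 hc)
    rw [hψ] at key
    calc Qws f ψ w ε r ^ c ≤ (Qws f (fun x => c * ψ x) w ε r ^ c⁻¹) ^ c :=
          Real.rpow_le_rpow (Qws_nonneg f) key hc0.le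
      _ = Qws f (fun x => c * ψ x) w ε r := Real.rpow_inv_rpow (Qws_nonneg f) hc0.ne'

end SeparatedSums

section Pressure

variable {X ι : Type*} [MetricSpace X] [Fintype ι] (f : ι → X → X) {ψ : X → ℝ} {n : ℕ}
  {ε r c : ℝ}

theorem Qns_eq_zero (hn : n ≠ 0) (h : IsEmpty ι ∨ IsEmpty X) : Qns f ψ n ε r = 0 := by
  rcases h with h | h
  · simp [Qns, hn]
  · simp [Qns, Qws_eq_zero]

theorem log_Qns_eq [Nonempty ι] (hS : 0 < ∑ σ : Fin n → ι, Qws f ψ (List.ofFn σ) ε r) :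
    Real.log (Qns f ψ n ε r) =
      Real.log (∑ σ : Fin n → ι, Qws f ψ (List.ofFn σ) ε r) - n * Real.log (Fintype.card ι) := by
  rw [Qns, Real.log_mul (by positivity) hS.ne', one_div, Real.log_inv, Real.log_pow]
  ring

theorem sum_Qws_pos [CompactSpace X] [Nonempty X] [Nonempty ι] (hψ : Continuous ψ)
    (hε : 0 < ε) (hr : 0 ≤ r) : 0 < ∑ σ : Fin n → ι, Qws f ψ (List.ofFn σ) ε r :=
  Finset.sum_pos (fun _ _ => Qws_pos f (bddAbove_sepSums f hψ hε hr _)) Finset.univ_nonempty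

theorem log_Qns_const_mul_le [CompactSpace X] (hψ : Continuous ψ) (hε : 0 < ε) (hr : 0 ≤ r)
    (hn : n ≠ 0) (hc : 1 ≤ c) :
    Real.log (Qns f (fun x => c * ψ x) n ε r) ≤
      c * Real.log (Qns f ψ n ε r) + (c - 1) * (n * Real.log (Fintype.card ι)) := by
  by_cases hdeg : IsEmpty ι ∨ IsEmpty X
  · simp only [Qns_eq_zero f hn hdeg, Real.log_zero, mul_zero, zero_add]
    exact mul_nonneg (by linarith) (mul_nonneg n.cast_nonneg (Real.log_natCast_nonneg _))
  obtain ⟨hι, hX⟩ : Nonempty ι ∧ Nonempty X := by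
    simpa only [not_or, not_isEmpty_iff] using hdeg
  have hS := sum_Qws_pos f (n := n) hψ hε hr
  have hSc := sum_Qws_pos f (ψ := fun x => c * ψ x) (n := n) (continuous_const.mul hψ) hε hr
  have hsum : ∑ σ : Fin n → ι, Qws f (fun x => c * ψ x) (List.ofFn σ) ε r ≤
      (∑ σ : Fin n → ι, Qws f ψ (List.ofFn σ) ε r) ^ c :=
    (Finset.sum_le_sum fun σ _ =>
      Qws_const_mul_le_rpow f (bddAbove_sepSums f hψ hε hr _) hc).trans
      (Real.sum_rpow_le_rpow_sum (fun σ _ => Qws_nonneg f) hc)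
  have hlog := Real.log_le_log hSc hsum
  rw [Real.log_rpow hS] at hlog
  rw [log_Qns_eq f hS, log_Qns_eq f hSc]
  linarith

theorem log_Qns_le_log_Qns_const_mul [CompactSpace X] (hψ : Continuous ψ) (hε : 0 < ε)
    (hr : 0 ≤ r) (hn : n ≠ 0) (hc : c ≤ 1) :
    c * Real.log (Qns f ψ n ε r) + (c - 1) * (n * Real.log (Fintype.card ι)) ≤
      Real.log (Qns f (fun x => c * ψ x) n ε r) := by
  by_cases hdeg : IsEmpty ι ∨ IsEmpty X
  · simp only [Qns_eq_zero f hn hdeg, Real.log_zero, mul_zero, zero_add]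
    exact mul_nonpos_of_nonpos_of_nonneg (by linarith)
      (mul_nonneg n.cast_nonneg (Real.log_natCast_nonneg _))
  obtain ⟨hι, hX⟩ : Nonempty ι ∧ Nonempty X := by
    simpa only [not_or, not_isEmpty_iff] using hdeg
  have hS := sum_Qws_pos f (n := n) hψ hε hr
  have hSc := sum_Qws_pos f (ψ := fun x => c * ψ x) (n := n) (continuous_const.mul hψ) hε hr
  have hsum : (∑ σ : Fin n → ι, Qws f ψ (List.ofFn σ) ε r) ^ c ≤
      ∑ σ : Fin n → ι, Qws f (fun x => c * ψ x) (List.ofFn σ) ε r :=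
    (Real.rpow_sum_le_sum_rpow Finset.univ_nonempty
      (fun σ _ => Qws_pos f (bddAbove_sepSums f hψ hε hr _)) hc).trans
      (Finset.sum_le_sum fun σ _ => rpow_le_Qws_const_mul f (bddAbove_sepSums f hψ hε hr _)
        (bddAbove_sepSums f (continuous_const.mul hψ) hε hr _) hc)
  have hlog := Real.log_le_log (Real.rpow_pos_of_pos hS c) hsum
  rw [Real.log_rpow hS] at hlog
  rw [log_Qns_eq f hS, log_Qns_eq f hSc]
  linarith

theorem Pse_const_mul_le [CompactSpace X] (hψ : Continuous ψ) (hε : 0 < ε) (hr : 0 ≤ r)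
    (hc : 1 ≤ c) :
    Pse f (fun x => c * ψ x) ε r ≤
      c * Pse f ψ ε r + (((c - 1) * Real.log (Fintype.card ι) : ℝ) : EReal) := by
  refine EReal.limsup_le_const_mul_limsup_add (by linarith) ?_
  filter_upwards [eventually_ne_atTop 0] with n hn
  have hn' : (0 : ℝ) < n := by positivity
  have h := mul_le_mul_of_nonneg_left (log_Qns_const_mul_le f hψ hε hr hn hc)
    (inv_nonneg.2 hn'.le)
  rw [mul_add, ← mul_assoc, mul_comm _ c, mul_assoc, mul_left_comm _ (c - 1),
    inv_mul_cancel_left₀ hn'.ne'] at h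
  exact_mod_cast h

theorem le_Pse_const_mul [CompactSpace X] (hψ : Continuous ψ) (hε : 0 < ε) (hr : 0 ≤ r)
    (hc : c ≤ 1) :
    c * Pse f ψ ε r + (((c - 1) * Real.log (Fintype.card ι) : ℝ) : EReal) ≤
      Pse f (fun x => c * ψ x) ε r := by
  refine EReal.const_mul_limsup_add_le ?_
  filter_upwards [eventually_ne_atTop 0] with n hn
  have hn' : (0 : ℝ) < n := by positivity
  have h := mul_le_mul_of_nonneg_left (log_Qns_le_log_Qns_const_mul f hψ hε hr hn hc)
    (inv_nonneg.2 hn'.le)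
  rw [mul_add, ← mul_assoc, mul_comm _ c, mul_assoc, mul_left_comm _ (c - 1),
    inv_mul_cancel_left₀ hn'.ne'] at h
  exact_mod_cast h

end Pressure

theorem Ps_scaling_general
    {X : Type*} [MetricSpace X] [CompactSpace X] {m : ℕ}
    (f : Fin m → X → X)
    (φ : X → ℝ) (hφ : Continuous φ)
    (r : ℝ) (hr0 : 0 < r) (c : ℝ) :
    (1 ≤ c → Ps f (fun x => c * φ x) r ≤
      (c : EReal) * Ps f φ r + (((c - 1) * Real.log m : ℝ) : EReal)) ∧
    (c ≤ 1 → (c : EReal) * Ps f φ r + (((c - 1) * Real.log m : ℝ) : EReal) ≤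
      Ps f (fun x => c * φ x) r) := by
  refine ⟨fun hc => ?_, fun hc => ?_⟩
  · refine EReal.biSup_le_const_mul_biSup_add (by linarith) fun ε hε => ?_
    simpa only [Fintype.card_fin] using Pse_const_mul_le f hφ hε hr0.le hc
  · refine EReal.const_mul_biSup_add_le Set.nonempty_Ioi fun ε hε => ?_
    simpa only [Fintype.card_fin] using le_Pse_const_mul f hφ hε hr0.le hc

theorem Ps_scaling
    {X : Type*} [MetricSpace X] [CompactSpace X] {m : ℕ}
    (f : Fin m → X → X) (hf : ∀ i, Continuous (f i))
    (φ : X → ℝ) (hφ : Continuous φ)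
    (r : ℝ) (hr0 : 0 < r) (hr1 : r < 1) (c : ℝ) :
    (1 ≤ c → Ps f (fun x => c * φ x) r ≤
      (c : EReal) * Ps f φ r + (((c - 1) * Real.log m : ℝ) : EReal)) ∧
    (c ≤ 1 → (c : EReal) * Ps f φ r + (((c - 1) * Real.log m : ℝ) : EReal) ≤
      Ps f (fun x => c * φ x) r) :=
  Ps_scaling_general f φ hφ r hr0 c
end

section
/- Let (X_1,d_1),(X_2,d_2) be compact metric spaces, f_0,...,f_{m-1} continuous self-maps of X_1, g_0,...,g_{m-1} continuous self-maps of X_2, and π: X_1 → X_2 a continuous surjection satisfying π∘f_i = g_i∘π for all i. Then for every continuous φ on X_2 and 0<r<1, P_r(g_0,...,g_{m-1},φ) ≤ P_r(f_0,...,f_{m-1},φ∘π). If moreover π is a homeomorphism, equality holds. -/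
open Filter Topology

/-!
If `δ` is a modulus of uniform continuity of `π` for `ε`, then `π` maps every `(w, δ, r)`-spanning
set `F` of the action of the `f i` onto a `(w, ε, r)`-spanning set of the action of the `g i`,
and `S_w φ ∘ π = S_w (φ ∘ π)`; hence `Q_w(g, φ, ε, r) ≤ Q_w(f, φ ∘ π, δ, r)`. Averaging over words,
taking logarithms, the `limsup` in `n` and the supremum over `ε` gives the inequality. When `π` is
a homeomorphism, `π⁻¹` is a factor map the other way round, which gives the reverse inequality.
-/

open Function Set

section Pressure

variable {ι X : Type*}

lemma continuous_fw [TopologicalSpace X] {f : ι → X → X} (hf : ∀ i, Continuous (f i)) :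
    ∀ w : List ι, Continuous (fw f w)
  | [] => continuous_id
  | a :: w => (continuous_fw hf w).comp (hf a)

lemma semiconj_fw {Y : Type*} {f : ι → X → X} {g : ι → Y → Y} {π : X → Y}
    (h : ∀ i, Semiconj π (f i) (g i)) : ∀ w : List ι, Semiconj π (fw f w) (fw g w)
  | [] => Semiconj.id_right
  | a :: w => (semiconj_fw h w).comp_right (h a)

lemma Sw_apply_of_semiconj {Y : Type*} {f : ι → X → X} {g : ι → Y → Y} {π : X → Y}
    (h : ∀ i, Semiconj π (f i) (g i)) (φ : Y → ℝ) (w : List ι) (x : X) :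
    Sw g φ w (π x) = Sw f (φ ∘ π) w x :=
  Finset.sum_congr rfl fun i _ => by rw [comp_apply, (semiconj_fw h _).eq]

variable [MetricSpace X]

lemma exists_rSpan [CompactSpace X] {f : ι → X → X} (hf : ∀ i, Continuous (f i))
    {w : List ι} {ε r : ℝ} (hε : 0 < ε) (hr : 0 < r) (hw : w ≠ []) :
    ∃ F : Finset X, rSpan f w ε r F := by
  let bowenBall : X → Set X := fun y =>
    {x | ∀ i ∈ Finset.range w.length, dist (fw f (w.take i) x) (fw f (w.take i) y) < ε}
  have hball : ∀ y ∈ univ, bowenBall y ∈ 𝓝 y := fun y _ =>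
    (Filter.eventually_all_finset _).2 fun i _ =>
      (continuous_fw hf _).continuousAt.eventually (Metric.ball_mem_nhds _ hε)
  obtain ⟨F, -, hcover⟩ := isCompact_univ.elim_nhds_subcover bowenBall hball
  refine ⟨F, fun x => ?_⟩
  obtain ⟨y, hyF, hxy⟩ := mem_iUnion₂.1 (hcover (mem_univ x))
  refine ⟨y, hyF, ?_⟩
  have hlen : (0 : ℝ) < w.length := by exact_mod_cast List.length_pos_iff.2 hw
  rw [Finset.filter_true_of_mem hxy, Finset.card_range]
  nlinarith

lemma rSpan.image {Y : Type*} [MetricSpace Y] [DecidableEq Y] {f : ι → X → X} {g : ι → Y → Y}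
    {π : X → Y} (hπs : Surjective π) (hsemi : ∀ i, Semiconj π (f i) (g i)) {w : List ι}
    {ε δ r : ℝ} (hδ : ∀ a b : X, dist a b < δ → dist (π a) (π b) < ε) {F : Finset X}
    (hF : rSpan f w δ r F) : rSpan g w ε r (F.image π) := by
  intro y
  obtain ⟨x, rfl⟩ := hπs y
  obtain ⟨z, hzF, hcard⟩ := hF x
  refine ⟨π z, Finset.mem_image_of_mem _ hzF, hcard.trans_le ?_⟩
  refine mod_cast Finset.card_le_card <| Finset.monotone_filter_right _ fun i _ hi => ?_
  rw [← (semiconj_fw hsemi _).eq, ← (semiconj_fw hsemi _).eq]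
  exact hδ _ _ hi

lemma Qw_le_sum {f : ι → X → X} {φ : X → ℝ} {w : List ι} {ε r : ℝ} {F : Finset X}
    (hF : rSpan f w ε r F) : Qw f φ w ε r ≤ ∑ x ∈ F, Real.exp (Sw f φ w x) :=
  csInf_le ⟨0, by rintro _ ⟨F, -, rfl⟩; positivity⟩ ⟨F, hF, rfl⟩

lemma exp_mul_le_Qw [Nonempty X] {f : ι → X → X} {φ : X → ℝ} {c : ℝ} (hc : ∀ x, c ≤ φ x)
    {w : List ι} {ε r : ℝ} (hspan : ∃ F : Finset X, rSpan f w ε r F) :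
    Real.exp (w.length * c) ≤ Qw f φ w ε r := by
  obtain ⟨F₀, hF₀⟩ := hspan
  refine le_csInf ⟨_, F₀, hF₀, rfl⟩ ?_
  rintro _ ⟨F, hF, rfl⟩
  obtain ⟨y, hyF, -⟩ := hF (Classical.arbitrary X)
  have hSw : w.length * c ≤ Sw f φ w y := by
    unfold Sw
    simpa using Finset.card_nsmul_le_sum (Finset.range w.length) _ c fun i _ => hc _
  calc Real.exp (w.length * c) ≤ Real.exp (Sw f φ w y) := Real.exp_le_exp.2 hSw
    _ ≤ ∑ x ∈ F, Real.exp (Sw f φ w x) :=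
      Finset.single_le_sum (fun x _ => (Real.exp_pos (Sw f φ w x)).le) hyF

lemma Qw_le_Qw_of_semiconj {Y : Type*} [MetricSpace Y] {f : ι → X → X} {g : ι → Y → Y}
    {π : X → Y} (hπs : Surjective π) (hsemi : ∀ i, Semiconj π (f i) (g i)) (φ : Y → ℝ)
    {w : List ι} {ε δ r : ℝ} (hδ : ∀ a b : X, dist a b < δ → dist (π a) (π b) < ε)
    (hspan : ∃ F : Finset X, rSpan f w δ r F) :
    Qw g φ w ε r ≤ Qw f (φ ∘ π) w δ r := by
  classical
  obtain ⟨F₀, hF₀⟩ := hspan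
  refine le_csInf ⟨_, F₀, hF₀, rfl⟩ ?_
  rintro _ ⟨F, hF, rfl⟩
  calc Qw g φ w ε r ≤ ∑ y ∈ F.image π, Real.exp (Sw g φ w y) :=
        Qw_le_sum (hF.image hπs hsemi hδ)
    _ ≤ ∑ x ∈ F, Real.exp (Sw g φ w (π x)) :=
        Finset.sum_image_le_of_nonneg fun _ _ => by positivity
    _ = ∑ x ∈ F, Real.exp (Sw f (φ ∘ π) w x) := by simp only [Sw_apply_of_semiconj hsemi]

lemma Qw_of_isEmpty [IsEmpty X] (f : ι → X → X) (φ : X → ℝ) (w : List ι) (ε r : ℝ) :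
    Qw f φ w ε r = 0 := by
  refine le_antisymm (by simpa using Qw_le_sum (φ := φ) (F := ∅) isEmptyElim) ?_
  exact Real.sInf_nonneg <| by rintro _ ⟨F, -, rfl⟩; positivity

variable [Fintype ι]

lemma Qn_pos [Nonempty ι] {f : ι → X → X} {φ : X → ℝ} {n : ℕ} {ε r : ℝ}
    (hQw : ∀ σ : Fin n → ι, 0 < Qw f φ (List.ofFn σ) ε r) : 0 < Qn f φ n ε r :=
  mul_pos (by positivity) (Finset.sum_pos (fun σ _ => hQw σ) Finset.univ_nonempty)

lemma Qn_of_isEmpty (h : IsEmpty ι ∨ IsEmpty X) (f : ι → X → X) (φ : X → ℝ) {n : ℕ}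
    (hn : n ≠ 0) (ε r : ℝ) : Qn f φ n ε r = 0 := by
  rcases h with h | h
  · have : Nonempty (Fin n) := ⟨⟨0, Nat.pos_of_ne_zero hn⟩⟩
    simp [Qn]
  · simp [Qn, Qw_of_isEmpty]

lemma Pr_of_isEmpty (h : IsEmpty ι ∨ IsEmpty X) (f : ι → X → X) (φ : X → ℝ) (r : ℝ) :
    Pr f φ r = 0 := by
  have hlimsup : ∀ ε : ℝ, atTop.limsup (fun n : ℕ =>
      (((n : ℝ)⁻¹ * Real.log (Qn f φ n ε r) : ℝ) : EReal)) = 0 := fun ε => by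
    refine (limsup_congr ?_).trans (limsup_const 0)
    filter_upwards [eventually_ne_atTop 0] with n hn
    simp [Qn_of_isEmpty h f φ hn]
  simp only [Pr, hlimsup]
  exact biSup_const nonempty_Ioi

theorem Pr_le_of_semiconj [CompactSpace X] {Y : Type*} [MetricSpace Y] {f : ι → X → X}
    (hf : ∀ i, Continuous (f i)) {g : ι → Y → Y} {π : X → Y} (hπ : UniformContinuous π)
    (hπs : Surjective π) (hsemi : ∀ i, Semiconj π (f i) (g i)) {φ : Y → ℝ}
    (hφ : BddBelow (range φ)) {r : ℝ} (hr : 0 < r) : Pr g φ r ≤ Pr f (φ ∘ π) r := by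
  classical
  by_cases hdeg : IsEmpty ι ∨ IsEmpty X
  · have hdegY : IsEmpty ι ∨ IsEmpty Y := hdeg.imp id fun hX => @Surjective.isEmpty _ _ hX _ hπs
    rw [Pr_of_isEmpty hdeg, Pr_of_isEmpty hdegY]
  obtain ⟨hι, hX⟩ : Nonempty ι ∧ Nonempty X := by simpa [not_or] using hdeg
  have hY : Nonempty Y := hX.map π
  obtain ⟨c, hc⟩ := hφ
  refine iSup₂_le fun ε hε => ?_
  obtain ⟨δ, hδ, hπδ⟩ := Metric.uniformContinuous_iff.1 hπ ε hε
  refine le_iSup₂_of_le δ hδ (limsup_le_limsup ?_)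
  filter_upwards [eventually_ne_atTop 0] with n hn
  have hspan : ∀ σ : Fin n → ι, ∃ F : Finset X, rSpan f (List.ofFn σ) δ r F := fun σ =>
    exists_rSpan hf hδ hr (by simpa using hn)
  -- `Real.log` is monotone only on positive reals: this is why the degenerate cases are split off.
  have hpos : 0 < Qn g φ n ε r := Qn_pos fun σ =>
    (Real.exp_pos _).trans_le <| exp_mul_le_Qw (fun y => hc (mem_range_self y))
      ((hspan σ).imp' _ fun _ hF => hF.image hπs hsemi fun _ _ h => hπδ h)
  have hle : Qn g φ n ε r ≤ Qn f (φ ∘ π) n δ r := by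
    unfold Qn
    gcongr with σ
    exact Qw_le_Qw_of_semiconj hπs hsemi φ (fun _ _ h => hπδ h) (hspan σ)
  exact EReal.coe_le_coe_iff.2 <| by gcongr

end Pressure

theorem Pr_factor_map_general
    {X₁ : Type*} [MetricSpace X₁] [CompactSpace X₁]
    {X₂ : Type*} [MetricSpace X₂] {m : ℕ}
    (f : Fin m → X₁ → X₁) (hf : ∀ i, Continuous (f i))
    (g : Fin m → X₂ → X₂)
    (π : X₁ → X₂) (hπc : Continuous π) (hπs : Function.Surjective π)
    (hsemi : ∀ i, π ∘ f i = g i ∘ π)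
    (φ : X₂ → ℝ) (hφ : Continuous φ)
    (r : ℝ) (hr0 : 0 < r) :
    Pr g φ r ≤ Pr f (φ ∘ π) r ∧
      (IsHomeomorph π → Pr g φ r = Pr f (φ ∘ π) r) := by
  have : CompactSpace X₂ := hπs.compactSpace hπc
  have hconj : ∀ i, Semiconj π (f i) (g i) := fun i => semiconj_iff_comp_eq.2 (hsemi i)
  have hle : Pr g φ r ≤ Pr f (φ ∘ π) r :=
    Pr_le_of_semiconj hf (CompactSpace.uniformContinuous_of_continuous hπc) hπs hconj
      (isCompact_range hφ).bddBelow hr0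
  refine ⟨hle, fun hπh => le_antisymm hle ?_⟩
  obtain ⟨e, rfl⟩ := isHomeomorph_iff_exists_homeomorph.1 hπh
  have hsemi_symm : ∀ i, Semiconj e.symm (g i) (f i) := fun i =>
    (hconj i).inverse_left e.left_inv e.right_inv
  have hg : ∀ i, Continuous (g i) := fun i =>
    e.symm.comp_continuous_iff.1 <| (semiconj_iff_comp_eq.1 (hsemi_symm i)) ▸
      (hf i).comp e.symm.continuous
  simpa [comp_def] using Pr_le_of_semiconj hg
    (CompactSpace.uniformContinuous_of_continuous e.symm.continuous) e.symm.surjective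
    hsemi_symm (isCompact_range (hφ.comp e.continuous)).bddBelow hr0

theorem Pr_factor_map
    {X₁ : Type*} [MetricSpace X₁] [CompactSpace X₁]
    {X₂ : Type*} [MetricSpace X₂] [CompactSpace X₂] {m : ℕ}
    (f : Fin m → X₁ → X₁) (hf : ∀ i, Continuous (f i))
    (g : Fin m → X₂ → X₂) (hg : ∀ i, Continuous (g i))
    (π : X₁ → X₂) (hπc : Continuous π) (hπs : Function.Surjective π)
    (hsemi : ∀ i, π ∘ f i = g i ∘ π)
    (φ : X₂ → ℝ) (hφ : Continuous φ)
    (r : ℝ) (hr0 : 0 < r) (hr1 : r < 1) :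
    Pr g φ r ≤ Pr f (φ ∘ π) r ∧
      (IsHomeomorph π → Pr g φ r = Pr f (φ ∘ π) r) :=
  Pr_factor_map_general f hf g π hπc hπs hsemi φ hφ r hr0
end

section
/- Let f_0,...,f_{m-1} be homeomorphisms of a compact metric space (X,d), φ continuous, F^{-1} the inverse skew product on Σ_m×X, g(ω,x)=φ(x). Then for any n≥1 and 0<ε≤1/2, Q_n^s(F^{-1},g,ε) ≥ m^n · Q_n^s(f_0^{-1},...,f_{m-1}^{-1},φ,ε). -/
open Filter Topology

section Skew

open Filter Topology

-- The metric `d'` on `Σ_m = (ℤ → Fin m)`: `d'(ω,ω') = 2^{-k}` with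
-- `k = inf{|n| : ω_n ≠ ω'_n}`.
open Classical in
noncomputable def dSigma (m : ℕ) (ω ω' : ℤ → Fin m) : ℝ :=
  if ω = ω' then 0
  else (1 / 2) ^ (sInf {k : ℕ | ∃ n : ℤ, n.natAbs = k ∧ ω n ≠ ω' n})

/-- The metric `D = max{d', d}` on `Σ_m × X`. -/
noncomputable def Dmet {X : Type*} [MetricSpace X] (m : ℕ)
    (p q : (ℤ → Fin m) × X) : ℝ :=
  max (dSigma m p.1 q.1) (dist p.2 q.2)

/-- The skew product `F(ω,x) = (σω, f_{ω_0}(x))`. -/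
def skew {X : Type*} {m : ℕ} (f : Fin m → X → X) :
    (ℤ → Fin m) × X → (ℤ → Fin m) × X :=
  fun p => (fun n => p.1 (n + 1), f (p.1 0) p.2)

/-- The inverse skew product `F⁻¹(ω,x) = (σ⁻¹ω, f_{ω_{-1}}⁻¹(x))` (for homeomorphisms). -/
def skewInv {X : Type*} [TopologicalSpace X] {m : ℕ} (f : Fin m → X ≃ₜ X) :
    (ℤ → Fin m) × X → (ℤ → Fin m) × X :=
  fun p => (fun n => p.1 (n - 1), (f (p.1 (-1))).symm p.2)

/-- `g(ω,x) = φ(x)`. -/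
def gPot {X : Type*} {m : ℕ} (φ : X → ℝ) : (ℤ → Fin m) × X → ℝ := fun p => φ p.2

/-- `(n,ε,r)`-spanning set for a single map `T` with distance function `ρ`. -/
def rSpanS {Y : Type*} (ρ : Y → Y → ℝ) (T : Y → Y) (n : ℕ) (ε r : ℝ)
    (F : Finset Y) : Prop :=
  ∀ y : Y, ∃ z ∈ F, (1 - r) * n <
    (((Finset.range n).filter (fun i => ρ (T^[i] y) (T^[i] z) < ε)).card : ℝ)

/-- `Q_n(T, g, ε, r)` for a single map. -/
noncomputable def QnS {Y : Type*} (ρ : Y → Y → ℝ) (T : Y → Y) (g : Y → ℝ)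
    (n : ℕ) (ε r : ℝ) : ℝ :=
  sInf {s : ℝ | ∃ F : Finset Y, rSpanS ρ T n ε r F ∧
    s = ∑ z ∈ F, Real.exp (∑ i ∈ Finset.range n, g (T^[i] z))}

/-- `(n,ε)`-spanning set for a single map. -/
def span0S {Y : Type*} (ρ : Y → Y → ℝ) (T : Y → Y) (n : ℕ) (ε : ℝ)
    (F : Finset Y) : Prop :=
  ∀ y : Y, ∃ z ∈ F, ∀ i < n, ρ (T^[i] y) (T^[i] z) ≤ ε

/-- `(n,ε)`-separated set for a single map. -/
def sep0S {Y : Type*} (ρ : Y → Y → ℝ) (T : Y → Y) (n : ℕ) (ε : ℝ)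
    (E : Finset Y) : Prop :=
  ∀ z ∈ E, ∀ z' ∈ E, z ≠ z' → ∃ i < n, ε < ρ (T^[i] z) (T^[i] z')

noncomputable def Qn0S {Y : Type*} (ρ : Y → Y → ℝ) (T : Y → Y) (g : Y → ℝ)
    (n : ℕ) (ε : ℝ) : ℝ :=
  sInf {s : ℝ | ∃ F : Finset Y, span0S ρ T n ε F ∧
    s = ∑ z ∈ F, Real.exp (∑ i ∈ Finset.range n, g (T^[i] z))}

noncomputable def Qns0S {Y : Type*} (ρ : Y → Y → ℝ) (T : Y → Y) (g : Y → ℝ)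
    (n : ℕ) (ε : ℝ) : ℝ :=
  sSup {s : ℝ | ∃ E : Finset Y, sep0S ρ T n ε E ∧
    s = ∑ z ∈ E, Real.exp (∑ i ∈ Finset.range n, g (T^[i] z))}

/-- The (Walters) topological pressure of a single map `T` with potential `g`,
for the distance function `ρ`. -/
noncomputable def P0S {Y : Type*} (ρ : Y → Y → ℝ) (T : Y → Y) (g : Y → ℝ) : EReal :=
  ⨆ ε ∈ Set.Ioi (0 : ℝ), atTop.limsup fun n : ℕ =>
    (((n : ℝ)⁻¹ * Real.log (Qn0S ρ T g n ε) : ℝ) : EReal)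

end Skew


/-!
A `(σ, ε)`-separated set `E_σ ⊆ X` lifts to `{(ω_σ, x) : x ∈ E_σ}`, where `ω_σ` spells the word
`σ` backwards in its negative coordinates: along the first `n` iterates of `F⁻¹` the fibre
coordinate then follows `f_σ⁻¹` and `g` reproduces `S_σ φ`. Lifts of different words are
separated by `d'`, which equals `1 > ε` as soon as the `0`-th coordinates differ, so the union
of the lifts over all `m^n` words is `(n, ε)`-separated for `F⁻¹` and its weight is the sum of
the weights of the `E_σ`. The weights of separated sets of `F⁻¹` are bounded, since a separated
set injects into `n`-tuples of cells of a finite partition of `Σ_m × X` into sets of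
`D`-diameter at most `ε`; hence their supremum dominates the sum of the suprema.
-/

theorem sum_csSup_le {ι : Type*} [Fintype ι] {S : ι → Set ℝ} (hne : ∀ i, (S i).Nonempty)
    {c : ℝ} (h : ∀ a : ι → ℝ, (∀ i, a i ∈ S i) → ∑ i, a i ≤ c) :
    ∑ i, sSup (S i) ≤ c := by
  classical
  choose a₀ ha₀ using hne
  suffices key : ∀ s : Finset ι, ∀ c, (∀ a : ι → ℝ, (∀ i, a i ∈ S i) → ∑ i ∈ s, a i ≤ c) →
      ∑ i ∈ s, sSup (S i) ≤ c from key _ c h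
  intro s
  induction s using Finset.induction_on with
  | empty => exact fun c h => by simpa using h a₀ ha₀
  | insert j s hj ih =>
    intro c h
    have hbound : ∀ b ∈ S j, b ≤ c - ∑ i ∈ s, sSup (S i) := by
      intro b hb
      have hrest : ∑ i ∈ s, sSup (S i) ≤ c - b := by
        refine ih _ fun a ha => ?_
        have := h (Function.update a j b) fun i => by
          rcases eq_or_ne i j with rfl | hij
          · simpa using hb
          · simpa [hij] using ha i
        rw [Finset.sum_insert hj, Function.update_self,
          Finset.sum_congr rfl fun i hi => Function.update_of_ne (ne_of_mem_of_not_mem hi hj) _ _]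
          at this
        linarith
      linarith
    rw [Finset.sum_insert hj]
    linarith [csSup_le ⟨_, ha₀ j⟩ hbound]

section SingleMap

variable {Y : Type*} {ρ : Y → Y → ℝ} {T : Y → Y} {n : ℕ} {ε : ℝ}

theorem sep0S.card_le {α : Type*} [Finite α] (c : Y → α) (hc : ∀ p q, c p = c q → ρ p q ≤ ε)
    {E : Finset Y} (hE : sep0S ρ T n ε E) : E.card ≤ Nat.card α ^ n := by
  let orbitCode : E → Fin n → α := fun p i => c (T^[i] p)
  have hinj : Function.Injective orbitCode := by
    rintro ⟨p, hp⟩ ⟨q, hq⟩ hpq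
    by_contra hne
    obtain ⟨i, hi, hsep⟩ := hE p hp q hq (fun h => hne (Subtype.ext h))
    exact (hc _ _ (congrFun hpq ⟨i, hi⟩)).not_gt hsep
  simpa [Nat.card_fun] using Nat.card_le_card_of_injective orbitCode hinj

theorem bddAbove_sep0S_sums {α : Type*} [Finite α] (c : Y → α)
    (hc : ∀ p q, c p = c q → ρ p q ≤ ε) {g : Y → ℝ} {M : ℝ} (hg : ∀ y, g y ≤ M) :
    BddAbove {s : ℝ | ∃ E : Finset Y, sep0S ρ T n ε E ∧
      s = ∑ z ∈ E, Real.exp (∑ i ∈ Finset.range n, g (T^[i] z))} := by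
  refine ⟨Nat.card α ^ n * Real.exp (n * M), ?_⟩
  rintro s ⟨E, hE, rfl⟩
  have hterm : ∀ z ∈ E, Real.exp (∑ i ∈ Finset.range n, g (T^[i] z)) ≤ Real.exp (n * M) :=
    fun z _ => Real.exp_le_exp.mpr <| by
      simpa using Finset.sum_le_sum fun i (_ : i ∈ Finset.range n) => hg (T^[i] z)
  calc _ ≤ E.card * Real.exp (n * M) := by simpa using Finset.sum_le_sum hterm
    _ ≤ _ := by gcongr; exact_mod_cast hE.card_le c hc

end SingleMap

theorem card_pow_mul_Qns0 {X ι : Type*} [MetricSpace X] [Fintype ι] (f : ι → X → X)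
    (φ : X → ℝ) (n : ℕ) (ε : ℝ) :
    (Fintype.card ι : ℝ) ^ n * Qns0 f φ n ε = ∑ σ : Fin n → ι, Qws0 f φ (List.ofFn σ) ε := by
  rw [Qns0, ← mul_assoc]
  rcases eq_or_ne ((Fintype.card ι : ℝ) ^ n) 0 with h | h
  · have : IsEmpty (Fin n → ι) := Fintype.card_eq_zero_iff.mp (by simpa using h)
    simp
  · rw [mul_one_div_cancel h, one_mul]

section Symbolic

variable {m : ℕ}

theorem dSigma_eq_one_of_ne {ω ω' : ℤ → Fin m} (h : ω 0 ≠ ω' 0) : dSigma m ω ω' = 1 := by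
  have hzero : sInf {k : ℕ | ∃ t : ℤ, t.natAbs = k ∧ ω t ≠ ω' t} = 0 :=
    Nat.sInf_eq_zero.mpr (Or.inl ⟨0, rfl, h⟩)
  rw [dSigma, if_neg fun he => h (congrFun he 0), hzero, pow_zero]

theorem dSigma_le_of_eqOn {ω ω' : ℤ → Fin m} {K : ℕ}
    (h : ∀ t : ℤ, t.natAbs ≤ K → ω t = ω' t) : dSigma m ω ω' ≤ (1 / 2 : ℝ) ^ (K + 1) := by
  unfold dSigma
  split_ifs with he
  · positivity
  obtain ⟨t, ht⟩ := Function.ne_iff.mp he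
  have hK : K + 1 ≤ sInf {k : ℕ | ∃ t : ℤ, t.natAbs = k ∧ ω t ≠ ω' t} := by
    refine le_csInf ⟨t.natAbs, t, rfl, ht⟩ ?_
    rintro k ⟨t, rfl, ht⟩
    by_contra hk
    exact ht (h t (by omega))
  exact pow_le_pow_of_le_one (by norm_num) (by norm_num) hK

open Fin.CommRing in
/-- The `n`-periodic sequence with `ω_{-j-1} = σ_j`, so that `F⁻¹` applies the letters of `σ`
in order; periodicity puts the last letter also at coordinate `0`, where `d'` sees it. -/
def seqOfWord {n : ℕ} [NeZero n] (σ : Fin n → Fin m) : ℤ → Fin m :=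
  fun t => σ ((-1 - t : ℤ) : Fin n)

open Fin.CommRing in
theorem seqOfWord_neg_sub_one {n : ℕ} [NeZero n] (σ : Fin n → Fin m) (j : Fin n) :
    seqOfWord σ (-(j : ℤ) - 1) = σ j := by
  simp only [seqOfWord]
  congr 1
  push_cast
  ring

open Fin.CommRing in
theorem seqOfWord_neg {n : ℕ} [NeZero n] (σ : Fin n → Fin m) (i : Fin n) :
    seqOfWord σ (-(i : ℤ)) = σ (i - 1) := by
  simp only [seqOfWord]
  congr 1
  push_cast
  ring

theorem seqOfWord_injective {n : ℕ} [NeZero n] :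
    Function.Injective (seqOfWord : (Fin n → Fin m) → ℤ → Fin m) := fun σ τ h =>
  funext fun j => by rw [← seqOfWord_neg_sub_one σ j, ← seqOfWord_neg_sub_one τ j, h]

def seqOfWordEmbedding (X : Type*) (n : ℕ) [NeZero n] :
    (Σ _ : Fin n → Fin m, X) ↪ (ℤ → Fin m) × X where
  toFun p := (seqOfWord p.1, p.2)
  inj' p q h := by
    obtain ⟨h₁, h₂⟩ := Prod.mk.inj h
    exact Sigma.ext (seqOfWord_injective h₁) (heq_of_eq h₂)

theorem seqOfWordEmbedding_apply {X : Type*} {n : ℕ} [NeZero n] (σ : Fin n → Fin m) (x : X) :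
    seqOfWordEmbedding X n ⟨σ, x⟩ = (seqOfWord σ, x) := rfl

def liftSeparated {X : Type*} {n : ℕ} [NeZero n] (E : (Fin n → Fin m) → Finset X) :
    Finset ((ℤ → Fin m) × X) :=
  (Finset.univ.sigma E).map (seqOfWordEmbedding X n)

end Symbolic

section InverseSkewProduct

variable {X : Type*} [TopologicalSpace X] {m : ℕ} (f : Fin m → X ≃ₜ X)

theorem skewInv_iterate (i : ℕ) (ω : ℤ → Fin m) (x : X) :
    (skewInv f)^[i] (ω, x) = (fun k => ω (k - i),
      fw (fun a => (f a).symm) (List.ofFn fun j : Fin i => ω (-(j : ℤ) - 1)) x) := by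
  induction i generalizing ω x with
  | zero => simp [fw]
  | succ i ih =>
    rw [Function.iterate_succ_apply, skewInv, ih, List.ofFn_succ]
    refine Prod.ext (funext fun k => congrArg ω (by push_cast; ring)) ?_
    simp only [fw, List.foldl_cons, Fin.val_succ, Fin.val_zero]
    congr 3
    funext j
    congr 1
    push_cast
    ring

theorem skewInv_iterate_seqOfWord {n : ℕ} [NeZero n] (σ : Fin n → Fin m) (x : X) {i : ℕ}
    (hi : i ≤ n) :
    (skewInv f)^[i] (seqOfWord σ, x) =
      (fun k => seqOfWord σ (k - i), fw (fun a => (f a).symm) ((List.ofFn σ).take i) x) := by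
  rw [skewInv_iterate]
  congr
  refine List.ext_getElem (by simp [hi]) fun j hj _ => ?_
  simpa using seqOfWord_neg_sub_one σ ⟨j, by simp at hj; omega⟩

theorem sum_gPot_skewInv_iterate_seqOfWord {n : ℕ} [NeZero n] (φ : X → ℝ) (σ : Fin n → Fin m)
    (x : X) :
    ∑ i ∈ Finset.range n, gPot φ ((skewInv f)^[i] (seqOfWord σ, x)) =
      Sw (fun a => (f a).symm) φ (List.ofFn σ) x := by
  rw [Sw, List.length_ofFn]
  refine Finset.sum_congr rfl fun i hi => ?_
  rw [skewInv_iterate_seqOfWord f σ x (Finset.mem_range.mp hi).le, gPot]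

theorem sum_liftSeparated {n : ℕ} [NeZero n] (φ : X → ℝ) (E : (Fin n → Fin m) → Finset X) :
    ∑ z ∈ liftSeparated E, Real.exp (∑ i ∈ Finset.range n, gPot φ ((skewInv f)^[i] z)) =
      ∑ σ, ∑ x ∈ E σ, Real.exp (Sw (fun a => (f a).symm) φ (List.ofFn σ) x) := by
  simp [liftSeparated, Finset.sum_sigma, seqOfWordEmbedding_apply,
    sum_gPot_skewInv_iterate_seqOfWord]

end InverseSkewProduct

section InverseSkewProductMetric

variable {X : Type*} [MetricSpace X] {m : ℕ} (f : Fin m → X ≃ₜ X)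

theorem sep0S_liftSeparated {n : ℕ} [NeZero n] {ε : ℝ} (hε : ε < 1)
    {E : (Fin n → Fin m) → Finset X}
    (hE : ∀ σ, sep0 (fun a => (f a).symm) (List.ofFn σ) ε (E σ)) :
    sep0S (Dmet m) (skewInv f) n ε (liftSeparated E) := by
  simp only [sep0S, liftSeparated, Finset.mem_map, Finset.mem_sigma, Finset.mem_univ,
    true_and]
  rintro _ ⟨⟨σ, x⟩, hx, rfl⟩ _ ⟨⟨τ, y⟩, hy, rfl⟩ hne
  simp only [seqOfWordEmbedding_apply]
  by_cases hστ : σ = τ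
  · subst hστ
    obtain ⟨i, hi, hdist⟩ := hE σ x hx y hy fun h => hne (by rw [h])
    rw [List.length_ofFn] at hi
    refine ⟨i, hi, ?_⟩
    rw [skewInv_iterate_seqOfWord f σ x hi.le, skewInv_iterate_seqOfWord f σ y hi.le]
    exact hdist.trans_le (le_max_right _ _)
  · obtain ⟨j, hj⟩ := Function.ne_iff.mp hστ
    refine ⟨(j + 1 : Fin n), (j + 1 : Fin n).isLt, ?_⟩
    rw [skewInv_iterate_seqOfWord f σ x (j + 1 : Fin n).isLt.le,
      skewInv_iterate_seqOfWord f τ y (j + 1 : Fin n).isLt.le]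
    refine hε.trans_le (le_of_eq_of_le (dSigma_eq_one_of_ne ?_).symm (le_max_left _ _))
    simpa [seqOfWord_neg] using hj

theorem bddAbove_sep0S_skewInv_sums [CompactSpace X] {φ : X → ℝ} (hφ : Continuous φ) (n : ℕ)
    {ε : ℝ} (hε : 0 < ε) :
    BddAbove {s : ℝ | ∃ E : Finset ((ℤ → Fin m) × X), sep0S (Dmet m) (skewInv f) n ε E ∧
      s = ∑ z ∈ E, Real.exp (∑ i ∈ Finset.range n, gPot φ ((skewInv f)^[i] z))} := by
  obtain ⟨M, hM⟩ := (isCompact_range hφ).bddAbove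
  obtain ⟨L, hL⟩ := exists_pow_lt_of_lt_one hε one_half_lt_one
  obtain ⟨t, -, ht, hcover⟩ := finite_cover_balls_of_compact (isCompact_univ (X := X))
    (half_pos hε)
  have : Finite t := ht.to_subtype
  have hnet : ∀ x : X, ∃ y : t, dist x y < ε / 2 := fun x => by
    simpa using hcover (Set.mem_univ x)
  choose net hnet using hnet
  refine bddAbove_sep0S_sums (α := (Finset.Icc (-(L : ℤ)) L → Fin m) × t)
    (fun p => (fun k => p.1 k, net p.2)) (fun p q hpq => ?_) fun p => hM (Set.mem_range_self p.2)
  obtain ⟨hwindow, hcell⟩ := Prod.mk.inj hpq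
  refine max_le ?_ ?_
  · calc dSigma m p.1 q.1 ≤ (1 / 2 : ℝ) ^ (L + 1) :=
          dSigma_le_of_eqOn fun k hk => congrFun hwindow ⟨k, by simp; omega⟩
      _ ≤ (1 / 2) ^ L := pow_le_pow_of_le_one (by norm_num) (by norm_num) L.le_succ
      _ ≤ ε := hL.le
  · calc dist p.2 q.2 ≤ dist p.2 (net p.2) + dist q.2 (net q.2) := by
          rw [hcell]; exact dist_triangle_right _ _ _
      _ ≤ ε := by linarith [hnet p.2, hnet q.2]

end InverseSkewProductMetric

theorem inverse_skew_Qns_bound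
    {X : Type*} [MetricSpace X] [CompactSpace X] {m : ℕ}
    (f : Fin m → X ≃ₜ X) (φ : X → ℝ) (hφ : Continuous φ) :
    ∀ n : ℕ, 1 ≤ n → ∀ ε : ℝ, 0 < ε → ε ≤ 1 / 2 →
      (m : ℝ) ^ n * Qns0 (fun i => ⇑(f i).symm) φ n ε ≤
        Qns0S (Dmet m) (skewInv f) (gPot φ) n ε := by
  intro n hn ε hε hε2
  have : NeZero n := ⟨by omega⟩
  have hLHS := card_pow_mul_Qns0 (fun i => ⇑(f i).symm) φ n ε
  rw [Fintype.card_fin] at hLHS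
  rw [hLHS]
  refine sum_csSup_le (fun σ => ?_) fun a ha => ?_
  · exact ⟨0, ∅, by simp [sep0], by simp⟩
  choose E hE hsum using ha
  refine le_csSup (bddAbove_sep0S_skewInv_sums f hφ n hε)
    ⟨liftSeparated E, sep0S_liftSeparated f (by linarith) hE, ?_⟩
  rw [sum_liftSeparated]
  exact Finset.sum_congr rfl fun σ _ => hsum σ
end
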